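/- In the Section 7 setting with n ≠ 4 (B the boundary of a 2-dimensional Delzant polytope with n vertices, Γ of twisted type with n−1 interior vertices, corresponding to the tuple (k_1,…,k_n)), there are, up to isomorphism of signed GKM graphs, at most three signed GKM structures compatible with the underlying unsigned GKM graph of Γ: (I) the signed graph Γ itself; (II) only if n is even, the signed structure arising from Γ by changing the sign of the weights of every second pair of basic edges; (III) only if k_i = ±1 for all i, a unique signed structure in which no two basic edges over the same base edge carry the same weight. -/

import Mathlib

/-!
Write a compatible signed structure as `α' = σ • aG` with signs `σ e = ±1`. Taking determinants
with the label of the transporting edge `e` removes the unknown coefficient in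
`α' (∇ₑ x) = α' x + c • α' e`, so every transport relates the signs of the edges it matches.
Transport along the vertical edges shows that the product of the signs of the two basic edges
over `e i` is a constant `±1`.

If it is `1`, transport along the basic edges makes the signs of the vertical edges constant and
those of the basic edges `2`-periodic in `i`: this is type I, or type II when `n` is even; the
flip of the two sheets absorbs a relative sign between vertical and basic edges. If it is `-1`,
vertical transport forces `k i = ±1` and determines the basic signs up to one global sign `ε`,
while the signs `ε * σ (g i)` evolve against `-k i * kPrev i` by steps or swaps. Such a sequence
is unique unless `k i * kPrev i` is constant; a constant value would be `-1`, and then no vertex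
of `Γ` would be interior.
-/

open Classical

namespace GKMPaper

/-- `ℤ^m`, the weight lattice. -/
abbrev Zm (m : ℕ) := Fin m → ℤ

/-- The relation identifying a vector with its negative. -/
def pmRel (m : ℕ) (a b : Zm m) : Prop := a = b ∨ a = -b

theorem pmRel_equiv (m : ℕ) : Equivalence (pmRel m) := by
  constructor
  · intro a; exact Or.inl rfl
  · intro a b hab
    rcases hab with hh | hh
    · exact Or.inl hh.symm
    · exact Or.inr (by rw [hh, neg_neg])
  · intro a b c h1 h2
    rcases h1 with h1 | h1 <;> rcases h2 with h2 | h2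
    · exact Or.inl (h1.trans h2)
    · exact Or.inr (h1.trans h2)
    · exact Or.inr (by rw [h1, h2])
    · exact Or.inl (by rw [h1, h2, neg_neg])

def pmSetoid (m : ℕ) : Setoid (Zm m) := ⟨pmRel m, pmRel_equiv m⟩

/-- `ℤ^m / ±1`. -/
def ZmPM (m : ℕ) := Quotient (pmSetoid m)

/-- The projection `ℤ^m → ℤ^m/±1`. -/
def pm {m : ℕ} (a : Zm m) : ZmPM m := Quotient.mk (pmSetoid m) a

/-- Linear independence over `ℤ`. -/
def Indep {m : ℕ} (a b : Zm m) : Prop :=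
  ∀ c d : ℤ, c • a + d • b = 0 → c = 0 ∧ d = 0

/-- An abstract graph with finite vertex and edge sets, each edge occurring with
both orientations, and no loops. -/
structure OrGraph : Type 1 where
  V : Type
  E : Type
  fV : Fintype V
  fE : Fintype E
  dV : DecidableEq V
  dE : DecidableEq E
  src : E → V
  dst : E → V
  rev : E → E
  rev_rev : ∀ e, rev (rev e) = e
  rev_ne : ∀ e, rev e ≠ e
  src_rev : ∀ e, src (rev e) = dst e
  no_loop : ∀ e, src e ≠ dst e

attribute [instance] OrGraph.fV OrGraph.fE OrGraph.dV OrGraph.dE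

/-- A connection on a graph. -/
structure Connection (G : OrGraph) where
  t : G.E → G.E → G.E
  src_t : ∀ e f, G.src f = G.src e → G.src (t e f) = G.dst e
  t_self : ∀ e, t e e = G.rev e
  t_inv : ∀ e f, G.src f = G.src e → t (G.rev e) (t e f) = f

/-- `k`-valence. -/
def OrGraph.Regular (G : OrGraph) (k : ℕ) : Prop :=
  ∀ v : G.V, Fintype.card {e : G.E // G.src e = v} = k

def OrGraph.Adj (G : OrGraph) (v w : G.V) : Prop :=
  ∃ e, G.src e = v ∧ G.dst e = w

def OrGraph.IsConn (G : OrGraph) : Prop :=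
  ∀ v w : G.V, Relation.ReflTransGen G.Adj v w

/-- Compatibility of a connection with an unsigned axial function. -/
def UnsignedCompat {m : ℕ} (G : OrGraph) (α : G.E → ZmPM m) (C : Connection G) : Prop :=
  (∀ e f : G.E, G.src f = G.src e → e ≠ f →
      ∀ a b : Zm m, pm a = α e → pm b = α f → Indep a b) ∧
  (∀ e f : G.E, G.src f = G.src e →
      ∃ (a g : Zm m) (c : ℤ), pm a = α f ∧ pm g = α e ∧ α (C.t e f) = pm (a + c • g)) ∧
  (∀ e : G.E, α (G.rev e) = α e)

/-- `(G, α)` is an (unsigned) abstract GKM graph of valence `k` with labels in `ℤ^m/±1`. -/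
def IsGKM {m : ℕ} (G : OrGraph) (k : ℕ) (α : G.E → ZmPM m) : Prop :=
  G.Regular k ∧ G.IsConn ∧ ∃ C : Connection G, UnsignedCompat G α C

/-- Compatibility of a connection with a signed axial function. -/
def SignedCompat {m : ℕ} (G : OrGraph) (α : G.E → Zm m) (C : Connection G) : Prop :=
  (∀ e f : G.E, G.src f = G.src e → e ≠ f → Indep (α e) (α f)) ∧
  (∀ e f : G.E, G.src f = G.src e → ∃ c : ℤ, α (C.t e f) = α f + c • α e) ∧
  (∀ e : G.E, α (G.rev e) = - α e)

/-- `(G, α)` is a signed abstract GKM graph of valence `k` with labels in `ℤ^m`. -/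
def IsSignedGKM {m : ℕ} (G : OrGraph) (k : ℕ) (α : G.E → Zm m) : Prop :=
  G.Regular k ∧ G.IsConn ∧ ∃ C : Connection G, SignedCompat G α C

/-- Effectivity of an unsigned GKM graph: at every vertex, the labels of the
outgoing edges lift to a generating set of `ℤ^m`. -/
def Effective {m : ℕ} (G : OrGraph) (α : G.E → ZmPM m) : Prop :=
  ∀ v : G.V, ∃ lift : {e : G.E // G.src e = v} → Zm m,
    (∀ e, pm (lift e) = α e.1) ∧ Submodule.span ℤ (Set.range lift) = ⊤

def SignedEffective {m : ℕ} (G : OrGraph) (α : G.E → Zm m) : Prop :=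
  ∀ v : G.V,
    Submodule.span ℤ (Set.range (fun e : {e : G.E // G.src e = v} => α e.1)) = ⊤

/-- A graph fibration: a morphism sending vertices to vertices and horizontal
edges to edges, bijectively from the horizontal edges at `p` to the edges at `π(p)`. -/
structure GraphFib (G B : OrGraph) where
  onV : G.V → B.V
  onE : G.E → B.E
  src_onE : ∀ e, onV (G.src e) ≠ onV (G.dst e) → B.src (onE e) = onV (G.src e)
  dst_onE : ∀ e, onV (G.src e) ≠ onV (G.dst e) → B.dst (onE e) = onV (G.dst e)
  rev_onE : ∀ e, onV (G.src e) ≠ onV (G.dst e) → onE (G.rev e) = B.rev (onE e)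

def GraphFib.Vertical {G B : OrGraph} (π : GraphFib G B) (e : G.E) : Prop :=
  π.onV (G.src e) = π.onV (G.dst e)

def GraphFib.IsFib {G B : OrGraph} (π : GraphFib G B) : Prop :=
  ∀ p : G.V, Function.Bijective
    (fun e : {e : G.E // G.src e = p ∧ ¬ π.Vertical e} =>
      (⟨π.onE e.1, by rw [π.src_onE e.1 e.2.2, e.2.1]⟩ : {f : B.E // B.src f = π.onV p}))

/-- The extra conditions for a (unsigned) GKM fibration, w.r.t. connections `C`, `CB`. -/
def GKMFibCompat {m : ℕ} {G B : OrGraph} (αΓ : G.E → ZmPM m) (αB : B.E → ZmPM m)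
    (π : GraphFib G B) (C : Connection G) (CB : Connection B) : Prop :=
  (∀ e, ¬ π.Vertical e → αΓ e = αB (π.onE e)) ∧
  (∀ e f, G.src f = G.src e → π.Vertical f → π.Vertical (C.t e f)) ∧
  (∀ e f, G.src f = G.src e → ¬ π.Vertical e → ¬ π.Vertical f →
      ¬ π.Vertical (C.t e f) ∧ π.onE (C.t e f) = CB.t (π.onE e) (π.onE f))

/-- `π` is a GKM fibration of unsigned GKM graphs. -/
def IsGKMFib {m : ℕ} {G B : OrGraph} (αΓ : G.E → ZmPM m) (αB : B.E → ZmPM m)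
    (π : GraphFib G B) : Prop :=
  π.IsFib ∧ ∃ (C : Connection G) (CB : Connection B),
    UnsignedCompat G αΓ C ∧ UnsignedCompat B αB CB ∧ GKMFibCompat αΓ αB π C CB

def SignedGKMFibCompat {m : ℕ} {G B : OrGraph} (sΓ : G.E → Zm m) (sB : B.E → Zm m)
    (π : GraphFib G B) (C : Connection G) (CB : Connection B) : Prop :=
  (∀ e, ¬ π.Vertical e → sΓ e = sB (π.onE e)) ∧
  (∀ e f, G.src f = G.src e → π.Vertical f → π.Vertical (C.t e f)) ∧
  (∀ e f, G.src f = G.src e → ¬ π.Vertical e → ¬ π.Vertical f →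
      ¬ π.Vertical (C.t e f) ∧ π.onE (C.t e f) = CB.t (π.onE e) (π.onE f))

/-- `π` is a signed GKM fibration of signed GKM graphs. -/
def IsSignedGKMFib {m : ℕ} {G B : OrGraph} (sΓ : G.E → Zm m) (sB : B.E → Zm m)
    (π : GraphFib G B) : Prop :=
  π.IsFib ∧ ∃ (C : Connection G) (CB : Connection B),
    SignedCompat G sΓ C ∧ SignedCompat B sB CB ∧ SignedGKMFibCompat sΓ sB π C CB

/-- `(π, ft)` is a fiberwise signed fibration: `ft` is a lift of `αΓ` on the
vertical edges, satisfying the congruence condition w.r.t. suitable connections. -/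
def IsFiberwiseSigned {m : ℕ} {G B : OrGraph} (αΓ : G.E → ZmPM m) (αB : B.E → ZmPM m)
    (π : GraphFib G B) (ft : G.E → Zm m) : Prop :=
  π.IsFib ∧
  (∀ e, π.Vertical e → pm (ft e) = αΓ e) ∧
  (∀ e, π.Vertical e → ft (G.rev e) = - ft e) ∧
  ∃ (C : Connection G) (CB : Connection B),
    UnsignedCompat G αΓ C ∧ UnsignedCompat B αB CB ∧ GKMFibCompat αΓ αB π C CB ∧
    ∀ e f, G.src f = G.src e → π.Vertical f →
      ∃ (g : Zm m) (c : ℤ), pm g = αΓ e ∧ ft (C.t e f) = ft f + c • g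

/-- Isomorphism of unsigned GKM graphs. -/
structure GKMIso {m : ℕ} (G : OrGraph) (α : G.E → ZmPM m)
    (G' : OrGraph) (α' : G'.E → ZmPM m) : Type where
  fV : G.V ≃ G'.V
  fE : G.E ≃ G'.E
  φ : Zm m ≃ₗ[ℤ] Zm m
  src_comm : ∀ e, G'.src (fE e) = fV (G.src e)
  dst_comm : ∀ e, G'.dst (fE e) = fV (G.dst e)
  rev_comm : ∀ e, fE (G.rev e) = G'.rev (fE e)
  lab : ∀ (e : G.E) (a : Zm m), pm a = α e → α' (fE e) = pm (φ a)

/-- Isomorphism of signed GKM graphs. -/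
structure SignedGKMIso {m : ℕ} (G : OrGraph) (α : G.E → Zm m)
    (G' : OrGraph) (α' : G'.E → Zm m) : Type where
  fV : G.V ≃ G'.V
  fE : G.E ≃ G'.E
  φ : Zm m ≃ₗ[ℤ] Zm m
  src_comm : ∀ e, G'.src (fE e) = fV (G.src e)
  dst_comm : ∀ e, G'.dst (fE e) = fV (G.dst e)
  rev_comm : ∀ e, fE (G.rev e) = G'.rev (fE e)
  lab : ∀ e, α' (fE e) = φ (α e)

/-- Equivalence of fiberwise signed fibrations over the same base (identity on `ℤ^m`). -/
structure FSFEquiv {m : ℕ} {G B G' : OrGraph}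
    (αΓ : G.E → ZmPM m) (π : GraphFib G B) (ft : G.E → Zm m)
    (αΓ' : G'.E → ZmPM m) (π' : GraphFib G' B) (ft' : G'.E → Zm m) : Type where
  fV : G.V ≃ G'.V
  fE : G.E ≃ G'.E
  src_comm : ∀ e, G'.src (fE e) = fV (G.src e)
  dst_comm : ∀ e, G'.dst (fE e) = fV (G.dst e)
  rev_comm : ∀ e, fE (G.rev e) = G'.rev (fE e)
  lab : ∀ e, αΓ' (fE e) = αΓ e
  baseV : ∀ p, π'.onV (fV p) = π.onV p
  baseE : ∀ e, ¬ π.Vertical e → π'.onE (fE e) = π.onE e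
  fiblab : ∀ e, π.Vertical e → ft' (fE e) = ft e

/-- Equivalence of signed GKM fibrations over the same base (identity on `ℤ^m`). -/
structure SFEquiv {m : ℕ} {G B G' : OrGraph}
    (sΓ : G.E → Zm m) (π : GraphFib G B)
    (sΓ' : G'.E → Zm m) (π' : GraphFib G' B) : Type where
  fV : G.V ≃ G'.V
  fE : G.E ≃ G'.E
  src_comm : ∀ e, G'.src (fE e) = fV (G.src e)
  dst_comm : ∀ e, G'.dst (fE e) = fV (G.dst e)
  rev_comm : ∀ e, fE (G.rev e) = G'.rev (fE e)
  lab : ∀ e, sΓ' (fE e) = sΓ e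
  baseV : ∀ p, π'.onV (fV p) = π.onV p
  baseE : ∀ e, ¬ π.Vertical e → π'.onE (fE e) = π.onE e

/-- Realizing `ℤ²` inside `ℝ² = ℂ`. -/
noncomputable def toC (a : Zm 2) : ℂ := (a 0 : ℝ) + (a 1 : ℝ) * Complex.I

def cross (a b : ℂ) : ℝ := a.re * b.im - a.im * b.re

/-- A vertex of a signed GKM graph with labels in `ℤ²` is interior if the cone
spanned by the labels of the edges emanating from it is all of `ℝ²`. -/
def InteriorVtx (G : OrGraph) (α : G.E → Zm 2) (p : G.V) : Prop :=
  ∀ x : ℂ, ∃ c : G.E → ℝ, (∀ e, 0 ≤ c e) ∧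
    x = ∑ e ∈ Finset.univ.filter (fun e : G.E => G.src e = p), c e • toC (α e)

/-- The angle from `w` to `w'`, represented in `[0, 2π)` if `ε = true`,
and in `(-2π, 0]` if `ε = false`. -/
noncomputable def angTo (ε : Bool) (w w' : ℂ) : ℝ :=
  if ε then (if (w' / w).arg < 0 then (w' / w).arg + 2 * Real.pi else (w' / w).arg)
  else (if 0 < (w' / w).arg then (w' / w).arg - 2 * Real.pi else (w' / w).arg)

/-- The winding number of a cyclic sequence of vectors w.r.t. the orientation `ε`. -/
noncomputable def winding {nn : ℕ} [NeZero nn] (w : ZMod nn → ℂ) (ε : Bool) : ℝ :=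
  (1 / (2 * Real.pi)) * ∑ i : ZMod nn, |angTo ε (w i) (w (i + 1))|

def LocallyConvex {nn : ℕ} (w : ZMod nn → ℂ) : Prop :=
  (∀ i, angTo true (w i) (w (i + 1)) ∈ Set.Ioo 0 Real.pi) ∨
  (∀ i, angTo false (w i) (w (i + 1)) ∈ Set.Ioo (-Real.pi) 0)

/-- `ε` is the preferred orientation of the locally convex sequence `w`. -/
def Preferred {nn : ℕ} (w : ZMod nn → ℂ) (ε : Bool) : Prop :=
  (ε = true ∧ ∀ i, angTo true (w i) (w (i + 1)) ∈ Set.Ioo 0 Real.pi) ∨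
  (ε = false ∧ ∀ i, angTo false (w i) (w (i + 1)) ∈ Set.Ioo (-Real.pi) 0)

/-- `P` lists the vertices of a strictly convex polygon in cyclic order. -/
def ConvexCyclic {nn : ℕ} (P : ZMod nn → ℂ) : Prop :=
  (∀ i j, j ≠ i → j ≠ i + 1 → 0 < cross (P (i + 1) - P i) (P j - P i)) ∨
  (∀ i j, j ≠ i → j ≠ i + 1 → cross (P (i + 1) - P i) (P j - P i) < 0)

def SubAdj (G : OrGraph) (S : Set G.E) (v w : G.V) : Prop :=
  ∃ e ∈ S, G.src e = v ∧ G.dst e = w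

/-- `S` is (the edge set of) a connected `2`-valent signed GKM subgraph of `(G, α)`. -/
def IsSigned2ValentSub (G : OrGraph) (α : G.E → Zm 2) (S : Set G.E) : Prop :=
  S.Nonempty ∧
  (∀ e ∈ S, G.rev e ∈ S) ∧
  (∀ v : G.V, (∃ e ∈ S, G.src e = v) → Nat.card {e : G.E // e ∈ S ∧ G.src e = v} = 2) ∧
  (∀ v w : G.V, (∃ e ∈ S, G.src e = v) → (∃ e ∈ S, G.src e = w) →
      Relation.ReflTransGen (SubAdj G S) v w) ∧
  ∃ T : G.E → G.E → G.E,
    (∀ e f, e ∈ S → f ∈ S → G.src f = G.src e → T e f ∈ S ∧ G.src (T e f) = G.dst e) ∧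
    (∀ e, e ∈ S → T e e = G.rev e) ∧
    (∀ e f, e ∈ S → f ∈ S → G.src f = G.src e → T (G.rev e) (T e f) = f) ∧
    (∀ e f, e ∈ S → f ∈ S → G.src f = G.src e → ∃ c : ℤ, α (T e f) = α f + c • α e)

/-- A `2`-valent signed GKM subgraph of polytope type: it is a cycle realized by the
boundary edges of a simple convex `2`-polytope, with labels representing the slopes. -/
def IsPolytopeTypeSub (G : OrGraph) (α : G.E → Zm 2) (S : Set G.E) : Prop :=
  IsSigned2ValentSub G α S ∧
  ∃ np : ℕ, 3 ≤ np ∧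
    ∃ (cyc : ZMod np → G.E) (P : ZMod np → ℂ) (t : ZMod np → ℝ),
      (∀ i, cyc i ∈ S) ∧
      (∀ ed ∈ S, ∃ i, ed = cyc i ∨ ed = G.rev (cyc i)) ∧
      (∀ i, G.dst (cyc i) = G.src (cyc (i + 1))) ∧
      ConvexCyclic P ∧
      (∀ i, 0 < t i) ∧
      (∀ i, P (i + 1) - P i = t i • toC (α (cyc i)))

/-- A fibration over an `n`-gon base is of product type if the lifts of a path
once around the base are closed. -/
def ProductType {G B : OrGraph} (π : GraphFib G B) {nn : ℕ} (eB : ZMod nn → B.E) : Prop :=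
  ∃ l : ZMod nn → G.E,
    ∀ i, ¬ π.Vertical (l i) ∧ π.onE (l i) = eB i ∧ G.dst (l i) = G.src (l (i + 1))

/-- `ℤ`-indexed `n`-gon data for a `2`-valent base graph. -/
structure ZGonData (B : OrGraph) (n : ℕ) where
  v : ℤ → B.V
  eB : ℤ → B.E
  v_per : ∀ i, v (i + n) = v i
  e_per : ∀ i, eB (i + n) = eB i
  src_e : ∀ i, B.src (eB i) = v i
  dst_e : ∀ i, B.dst (eB i) = v (i + 1)
  v_inj : ∀ i j : ℤ, 0 ≤ i → i < n → 0 ≤ j → j < n → v i = v j → i = j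
  v_surj : ∀ w : B.V, ∃ i : ℤ, v i = w
  e_cover : ∀ ed : B.E, ∃ i : ℤ, ed = eB i ∨ ed = B.rev (eB i)

/-- A choice of sign representatives `γ_i` of the base labels with
`γ_i ≡ -γ_{i+2} (mod γ_{i+1})` for all `i ∈ ℤ`. -/
structure GammaData {B : OrGraph} {n : ℕ} (αB : B.E → ZmPM 2) (D : ZGonData B n) where
  γ : ℤ → Zm 2
  lift : ∀ i, pm (γ i) = αB (D.eB i)
  cong : ∀ i, ∃ c : ℤ, γ i + γ (i + 2) = c • γ (i + 1)

/-- A fiberwise signed `3`-valent GKM fibration over `(B, αB)`. -/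
structure FSFOver (B : OrGraph) (αB : B.E → ZmPM 2) : Type 1 where
  G : OrGraph
  αΓ : G.E → ZmPM 2
  hΓ : IsGKM G 3 αΓ
  π : GraphFib G B
  ft : G.E → Zm 2
  isfs : IsFiberwiseSigned αΓ αB π ft

def FSFOver.Equiv {B : OrGraph} {αB : B.E → ZmPM 2} (F F' : FSFOver B αB) : Prop :=
  Nonempty (FSFEquiv F.αΓ F.π F.ft F'.αΓ F'.π F'.ft)

/-- A signed `3`-valent GKM fibration over the signed graph `(B, sB)`. -/
structure SFOver (B : OrGraph) (sB : B.E → Zm 2) : Type 1 where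
  G : OrGraph
  sΓ : G.E → Zm 2
  hΓ : IsSignedGKM G 3 sΓ
  π : GraphFib G B
  issf : IsSignedGKMFib sΓ sB π

def SFOver.Equiv {B : OrGraph} {sB : B.E → Zm 2} (F F' : SFOver B sB) : Prop :=
  Nonempty (SFEquiv F.sΓ F.π F'.sΓ F'.π)

/-- The fibration `F` realizes the classification datum `([k], η)` w.r.t. the fixed data. -/
def RealizesFS {B : OrGraph} {αB : B.E → ZmPM 2} {n : ℕ} (D : ZGonData B n)
    (Γd : GammaData αB D) (F : FSFOver B αB) (k : ZMod n → ℤ) (η : Bool) : Prop :=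
  (η = false ↔ ProductType F.π (fun i : ZMod n => D.eB i.val)) ∧
  ∃ (gE : ℤ → F.G.E) (αf : ℤ → Zm 2) (kk : ℤ → ℤ),
    (∀ i, F.π.Vertical (gE i)) ∧
    (∀ i, F.π.onV (F.G.src (gE i)) = D.v i) ∧
    (∀ i, gE (i + n) = gE i ∨ gE (i + n) = F.G.rev (gE i)) ∧
    (∀ i, pm (αf i) = F.αΓ (gE i)) ∧
    (∀ i, ∃ c : ℤ, αf (i + 1) = αf i + c • Γd.γ i) ∧
    (∀ i, αf i = kk i • Γd.γ (i - 1) - kk (i - 1) • Γd.γ i) ∧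
    (∀ i, kk i ≠ 0) ∧
    (∀ i : ZMod n, k i = kk i.val)

/-- The signed fibration `F` realizes the classification datum `([k], η)`. -/
def RealizesS {B : OrGraph} (sB : B.E → Zm 2) {αB : B.E → ZmPM 2} {n : ℕ}
    (D : ZGonData B n) (Γd : GammaData αB D) (F : SFOver B sB)
    (k : ZMod n → ℤ) (η : Bool) : Prop :=
  (η = false ↔ ProductType F.π (fun i : ZMod n => D.eB i.val)) ∧
  ∃ (gE : ℤ → F.G.E) (αf : ℤ → Zm 2) (kk : ℤ → ℤ),
    (∀ i, F.π.Vertical (gE i)) ∧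
    (∀ i, F.π.onV (F.G.src (gE i)) = D.v i) ∧
    (∀ i, gE (i + n) = gE i ∨ gE (i + n) = F.G.rev (gE i)) ∧
    (∀ i, pm (αf i) = pm (F.sΓ (gE i))) ∧
    (∀ i, ∃ c : ℤ, αf (i + 1) = αf i + c • Γd.γ i) ∧
    (∀ i, αf i = kk i • Γd.γ (i - 1) - kk (i - 1) • Γd.γ i) ∧
    (∀ i, kk i ≠ 0) ∧
    (∀ i : ZMod n, k i = kk i.val)

def KRel (n : ℕ) (a b : {k : ZMod n → ℤ // ∀ i, k i ≠ 0}) : Prop :=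
  a.1 = b.1 ∨ a.1 = - b.1

/-- `((ℤ∖{0})^n)/±1`. -/
def KClass (n : ℕ) := Quot (KRel n)

/-- The Section 7 setting: a signed GKM fibration of twisted type of a `3`-valent
signed GKM graph `Γ` over `B`, the boundary of a 2-dimensional Delzant polytope with
`n` vertices, with `Γ` having `n-1` interior vertices; with the basic edges `f i`, `h i`
over `e i` and the fiber edges `g i`. -/
structure Section7 : Type 1 where
  n : ℕ
  hn : 3 ≤ n
  G : OrGraph
  B : OrGraph
  aG : G.E → Zm 2
  aB : B.E → Zm 2
  hG : IsSignedGKM G 3 aG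
  hB : IsSignedGKM B 2 aB
  π : GraphFib G B
  hfib : IsSignedGKMFib aG aB π
  v : ZMod n → B.V
  e : ZMod n → B.E
  v_bij : Function.Bijective v
  src_e : ∀ i, B.src (e i) = v i
  dst_e : ∀ i, B.dst (e i) = v (i + 1)
  e_cover : ∀ ed : B.E, ∃ i, ed = e i ∨ ed = B.rev (e i)
  P : ZMod n → ℂ
  tl : ZMod n → ℝ
  tl_pos : ∀ i, 0 < tl i
  polygon : ConvexCyclic P
  slope : ∀ i, P (i + 1) - P i = tl i • toC (aB (e i))
  delzant : ∀ i, (aB (e (i - 1)) 0) * (aB (e i) 1) - (aB (e (i - 1)) 1) * (aB (e i) 0) = 1 ∨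
                 (aB (e (i - 1)) 0) * (aB (e i) 1) - (aB (e (i - 1)) 1) * (aB (e i) 0) = -1
  f : ZMod n → G.E
  h : ZMod n → G.E
  g : ZMod n → G.E
  f_horiz : ∀ i, ¬ π.Vertical (f i)
  h_horiz : ∀ i, ¬ π.Vertical (h i)
  f_over : ∀ i, π.onE (f i) = e i
  h_over : ∀ i, π.onE (h i) = e i
  f_ne_h : ∀ i, f i ≠ h i
  g_vert : ∀ i, π.Vertical (g i)
  g_src : ∀ i, G.src (g i) = G.src (f i)
  g_dst : ∀ i, G.dst (g i) = G.src (h i)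
  chain_f : ∀ i : ZMod n, i + 1 ≠ 0 → G.dst (f i) = G.src (f (i + 1))
  chain_h : ∀ i : ZMod n, i + 1 ≠ 0 → G.dst (h i) = G.src (h (i + 1))
  twist_f : G.dst (f (-1)) = G.src (h 0)
  twist_h : G.dst (h (-1)) = G.src (f 0)
  k : ZMod n → ℤ
  k_ne : ∀ i, k i ≠ 0
  fiberweight : ∀ i, aG (g i) =
    k i • aB (e (i - 1)) - (if i = 0 then - k (i - 1) else k (i - 1)) • aB (e i)
  interior_count : Nat.card {p : G.V // InteriorVtx G aG p} = n - 1

/-- The type II signed structure: the signs of the labels of every second pair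
of basic edges are reversed. -/
noncomputable def Section7.alphaII (S : Section7) : S.G.E → Zm 2 :=
  fun ed =>
    if ∃ i : ZMod S.n, Odd i.val ∧
        (ed = S.f i ∨ ed = S.h i ∨ ed = S.G.rev (S.f i) ∨ ed = S.G.rev (S.h i))
    then - S.aG ed else S.aG ed

namespace OrGraph

variable (G : OrGraph)

lemma dst_rev (e : G.E) : G.dst (G.rev e) = G.src e := by
  rw [← G.src_rev, G.rev_rev]

lemma rev_eq_iff {a b : G.E} : G.rev a = b ↔ a = G.rev b :=
  ⟨fun h => by rw [← h, G.rev_rev], fun h => by rw [h, G.rev_rev]⟩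

variable {G}

lemma eq_or_eq_or_eq_of_regular_three (hG : G.Regular 3) {a b c x : G.E}
    (hb : G.src b = G.src a) (hc : G.src c = G.src a) (hx : G.src x = G.src a)
    (hab : a ≠ b) (hac : a ≠ c) (hbc : b ≠ c) : x = a ∨ x = b ∨ x = c := by
  let star := {e : G.E // G.src e = G.src a}
  have hcard : ({⟨a, rfl⟩, ⟨b, hb⟩, ⟨c, hc⟩} : Finset star).card = Fintype.card star := by
    rw [hG, Finset.card_eq_three]
    exact ⟨_, _, _, fun h => hab (congrArg Subtype.val h), fun h => hac (congrArg Subtype.val h),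
      fun h => hbc (congrArg Subtype.val h), rfl⟩
  have hmem := Finset.mem_univ (⟨x, hx⟩ : star)
  rw [← Finset.eq_univ_of_card _ hcard] at hmem
  simpa [Subtype.ext_iff] using hmem

end OrGraph

lemma GraphFib.vertical_rev_iff {G B : OrGraph} (π : GraphFib G B) (e : G.E) :
    π.Vertical (G.rev e) ↔ π.Vertical e := by
  unfold GraphFib.Vertical
  rw [G.src_rev, G.dst_rev]
  exact eq_comm

namespace Connection

variable {G : OrGraph} (C : Connection G)

lemma t_injOn {e x y : G.E} (hx : G.src x = G.src e) (hy : G.src y = G.src e)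
    (h : C.t e x = C.t e y) : x = y := by
  rw [← C.t_inv e x hx, ← C.t_inv e y hy, h]

lemma t_eq_or_t_eq {e x y x' y' : G.E} (hx : G.src x = G.src e) (hy : G.src y = G.src e)
    (hxe : x ≠ e) (hye : y ≠ e) (hxy : x ≠ y)
    (hstar : ∀ z, G.src z = G.dst e → z = G.rev e ∨ z = x' ∨ z = y') :
    (C.t e x = x' ∧ C.t e y = y') ∨ (C.t e x = y' ∧ C.t e y = x') := by
  have hrev : ∀ {z}, G.src z = G.src e → z ≠ e → C.t e z ≠ G.rev e := fun hz hze h =>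
    hze (C.t_injOn hz rfl (h.trans (C.t_self e).symm))
  have hne : C.t e x ≠ C.t e y := fun h => hxy (C.t_injOn hx hy h)
  rcases hstar _ (C.src_t e x hx) with h1 | h1 | h1 <;>
  rcases hstar _ (C.src_t e y hy) with h2 | h2 | h2
  all_goals first
    | exact absurd h1 (hrev hx hxe)
    | exact absurd h2 (hrev hy hye)
    | exact absurd (h1.trans h2.symm) hne
    | exact Or.inl ⟨h1, h2⟩
    | exact Or.inr ⟨h1, h2⟩

end Connection

def det2 (u v : Zm 2) : ℤ := u 0 * v 1 - u 1 * v 0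

section det2

variable (u v w : Zm 2) (c : ℤ)

@[simp] lemma det2_self : det2 u u = 0 := by unfold det2; ring
@[simp] lemma det2_smul_left : det2 (c • u) v = c * det2 u v := by
  simp only [det2, Pi.smul_apply, smul_eq_mul]; ring
@[simp] lemma det2_smul_right : det2 u (c • v) = c * det2 u v := by
  simp only [det2, Pi.smul_apply, smul_eq_mul]; ring
@[simp] lemma det2_neg_left : det2 (-u) v = -det2 u v := by
  simp only [det2, Pi.neg_apply]; ring
@[simp] lemma det2_neg_right : det2 u (-v) = -det2 u v := by
  simp only [det2, Pi.neg_apply]; ring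
@[simp] lemma det2_add_left : det2 (u + v) w = det2 u w + det2 v w := by
  simp only [det2, Pi.add_apply]; ring
@[simp] lemma det2_add_right : det2 u (v + w) = det2 u v + det2 u w := by
  simp only [det2, Pi.add_apply]; ring
@[simp] lemma det2_sub_left : det2 (u - v) w = det2 u w - det2 v w := by
  simp only [det2, Pi.sub_apply]; ring
@[simp] lemma det2_sub_right : det2 u (v - w) = det2 u v - det2 u w := by
  simp only [det2, Pi.sub_apply]; ring
lemma det2_swap : det2 u v = -det2 v u := by unfold det2; ring

end det2

section SignedCompat

variable {G : OrGraph} {α : G.E → Zm 2} {C : Connection G} (hC : SignedCompat G α C)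
include hC

lemma SignedCompat.exists_det2_transport {e x : G.E} (hx : G.src x = G.src e) (w : Zm 2) :
    ∃ c : ℤ, det2 (α (C.t e x)) w = det2 (α x) w + c * det2 (α e) w := by
  obtain ⟨c, hc⟩ := hC.2.1 e x hx
  exact ⟨c, by rw [hc, det2_add_left, det2_smul_left]⟩

lemma SignedCompat.det2_transport {e x : G.E} (hx : G.src x = G.src e) :
    det2 (α (C.t e x)) (α e) = det2 (α x) (α e) := by
  obtain ⟨c, hc⟩ := hC.exists_det2_transport hx (α e)
  rw [hc, det2_self, mul_zero, add_zero]

end SignedCompat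

lemma nonempty_signedGKMIso_of_smul {m : ℕ} {G : OrGraph} {α β : G.E → Zm m} {u : ℤ}
    (hu : IsUnit u) (h : ∀ e, β e = u • α e) : Nonempty (SignedGKMIso G α G β) :=
  ⟨{ fV := Equiv.refl _
     fE := Equiv.refl _
     φ := LinearEquiv.smulOfUnit hu.unit
     src_comm := fun _ => rfl
     dst_comm := fun _ => rfl
     rev_comm := fun _ => rfl
     lab := fun e => h e }⟩

lemma cross_toC (u v : Zm 2) : cross (toC u) (toC v) = det2 u v := by
  simp [cross, toC, det2]

lemma not_interiorVtx_of_det2_nonneg {G : OrGraph} {α : G.E → Zm 2} {p : G.V} {u w : Zm 2}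
    (hw : det2 u w < 0) (h : ∀ e, G.src e = p → 0 ≤ det2 u (α e)) : ¬ InteriorVtx G α p := by
  intro hint
  obtain ⟨c, hc, hsum⟩ := hint (toC w)
  let L : ℂ →ₗ[ℝ] ℝ :=
    { toFun := cross (toC u)
      map_add' := fun x y => by simp only [cross, Complex.add_re, Complex.add_im]; ring
      map_smul' := fun r x => by
        simp only [cross, Complex.real_smul, Complex.mul_re, Complex.mul_im, Complex.ofReal_re,
          Complex.ofReal_im, RingHom.id_apply, smul_eq_mul]; ring }
  have hL := congrArg L hsum
  rw [map_sum] at hL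
  have hneg : L (toC w) < 0 := by
    change cross (toC u) (toC w) < 0
    rw [cross_toC]; exact_mod_cast hw
  refine absurd (Finset.sum_nonneg fun e he => ?_) (hL ▸ hneg).not_ge
  rw [map_smul, smul_eq_mul]
  change 0 ≤ c e * cross (toC u) (toC (α e))
  rw [cross_toC]
  exact mul_nonneg (hc e) (by exact_mod_cast h e (Finset.mem_filter.mp he).2)

lemma exists_det2_halfplane {x y : Zm 2} (hxy : IsUnit (det2 x y)) {t : ℤ} (ht : IsUnit t) :
    ∃ u w : Zm 2, det2 u w < 0 ∧ 0 ≤ det2 u y ∧ 0 ≤ det2 u (t • (x + y)) ∧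
      0 ≤ det2 u (-x) := by
  have hD := Int.isUnit_mul_self hxy
  rcases Int.isUnit_iff.mp ht with rfl | rfl
  · refine ⟨det2 x y • x, -y, ?_, ?_, ?_, ?_⟩ <;>
      simp only [det2_smul_left, det2_neg_right, det2_add_right, one_smul, det2_self] <;> linarith
  · refine ⟨det2 x y • y, x, ?_, ?_, ?_, ?_⟩ <;>
      simp only [det2_smul_left, det2_neg_right, det2_add_right, neg_smul, one_smul, det2_self,
        det2_swap y x] <;> linarith

namespace ZMod

variable {n : ℕ} [NeZero n]

lemma forall_of_add_one {P : ZMod n → Prop} (h0 : P 0) (h : ∀ i, P i → P (i + 1))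
    (i : ZMod n) : P i := by
  rw [← ZMod.natCast_zmod_val i]
  induction i.val with
  | zero => simpa using h0
  | succ m ih => simpa [Nat.cast_succ] using h _ ih

lemma eq_apply_zero_of_add_one {β : Type*} {f : ZMod n → β} (h : ∀ i, f (i + 1) = f i)
    (i : ZMod n) : f i = f 0 :=
  forall_of_add_one (P := fun i => f i = f 0) rfl (fun i hi => (h i).trans hi) i

lemma prod_sub_one {M : Type*} [CommMonoid M] (f : ZMod n → M) :
    ∏ i, f (i - 1) = ∏ i, f i :=
  Fintype.prod_equiv (Equiv.subRight 1) _ _ (fun _ => rfl)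

end ZMod

section AltSign

variable {n : ℕ} [NeZero n]

def altSign (i : ZMod n) : ℤ := if Odd i.val then -1 else 1

lemma altSign_add_one (hn : Even n) (i : ZMod n) : altSign (i + 1) = -altSign i := by
  have h1 : (1 : ZMod n).val = 1 := by
    rw [ZMod.val_one_eq_one_mod]
    obtain ⟨m, hm⟩ := hn
    exact Nat.mod_eq_of_lt (by have := NeZero.pos n; omega)
  have key : Odd (i + 1).val ↔ ¬ Odd i.val := by
    rw [ZMod.val_add, h1, Nat.odd_iff, Nat.odd_iff, Nat.mod_mod_of_dvd _ (even_iff_two_dvd.mp hn)]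
    omega
  by_cases h : Odd i.val <;> simp [altSign, key, h]

lemma eq_const_or_alternating {a : ZMod n → ℤ} (ha : ∀ i, IsUnit (a i))
    (h : ∀ i, a (i + 1) = a (i - 1)) :
    (∀ i, a i = a 0) ∨ (Even n ∧ ∀ i, a i = altSign i * a 0) := by
  have hsq : ∀ i, a i * a i = 1 := fun i => Int.isUnit_mul_self (ha i)
  have hu : ∀ i, a (i + 1) * a i = a 1 * a 0 := fun i =>
    (ZMod.eq_apply_zero_of_add_one (f := fun i => a (i + 1) * a i)
      (fun i => by rw [h (i + 1), add_sub_cancel_right, mul_comm]) i).trans (by rw [zero_add])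
  rcases Int.isUnit_iff.mp ((ha 1).mul (ha 0)) with h1 | h1
  · left
    refine ZMod.eq_apply_zero_of_add_one fun i => ?_
    linear_combination a i * (hu i).trans h1 - a (i + 1) * hsq i
  · right
    have hneg : ∀ i, a (i + 1) = -a i := fun i => by
      linear_combination a i * (hu i).trans h1 - a (i + 1) * hsq i
    have heven : Even n := by
      have hprod : ∏ i, (a (i + 1) * a i) = (-1) ^ n := by
        simp_rw [hu, h1]
        rw [Finset.prod_const, Finset.card_univ, ZMod.card]
      have hone : ∏ i, (a (i + 1) * a i) = 1 := by
        have hshift : ∏ i, a (i + 1) = ∏ i, a i :=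
          Fintype.prod_equiv (Equiv.addRight 1) _ _ (fun _ => rfl)
        rw [Finset.prod_mul_distrib, hshift, ← Finset.prod_mul_distrib]
        exact Finset.prod_eq_one fun i _ => hsq i
      exact (neg_one_pow_eq_one_iff_even (by norm_num)).mp (hprod.symm.trans hone)
    refine ⟨heven, fun i => ?_⟩
    have hc := ZMod.eq_apply_zero_of_add_one (f := fun i => altSign i * a i)
      (fun i => by rw [altSign_add_one heven, hneg]; ring) i
    have hs : altSign i * altSign i = 1 := by unfold altSign; split_ifs <;> norm_num
    have h0 : altSign (0 : ZMod n) = 1 := by simp [altSign]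
    simp only [h0, one_mul] at hc
    linear_combination altSign i * hc - a i * hs

end AltSign

def StepOrSwap {n : ℕ} (d q : ZMod n → ℤ) (i : ZMod n) : Prop :=
  (d (i + 1) = d i ∧ q (i + 1) = q i) ∨ (d (i + 1) = q i ∧ q (i + 1) = d i)

/-- Agreement and opposition of `d'` and `d` both propagate along the cycle, and opposition
everywhere would make every move of `q` a step, i.e. `q` constant. -/
lemma eq_of_stepOrSwap {n : ℕ} [NeZero n] {d d' q : ZMod n → ℤ} (hq : ¬ ∀ i, q (i + 1) = q i)
    (hd : ∀ i, IsUnit (d i)) (hd' : ∀ i, IsUnit (d' i))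
    (h : ∀ i, StepOrSwap d q i) (h' : ∀ i, StepOrSwap d' q i) : d' = d := by
  have hsame : ∀ i, d' i = d i → d' (i + 1) = d (i + 1) := fun i hi => by
    rcases h i with ⟨a1, a2⟩ | ⟨a1, a2⟩ <;> rcases h' i with ⟨b1, b2⟩ | ⟨b1, b2⟩ <;> linarith
  have hopp : ∀ i, d' i = -d i → d' (i + 1) = -d (i + 1) := fun i hi => by
    have := (hd i).ne_zero
    rcases h i with ⟨a1, a2⟩ | ⟨a1, a2⟩ <;> rcases h' i with ⟨b1, b2⟩ | ⟨b1, b2⟩ <;> omega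
  rcases Int.isUnit_eq_or_eq_neg (hd' 0) (hd 0) with h0 | h0
  · exact funext (ZMod.forall_of_add_one h0 hsame)
  · refine absurd (fun i => ?_) hq
    have hi := ZMod.forall_of_add_one h0 hopp i
    have := (hd i).ne_zero
    rcases h i with ⟨-, a2⟩ | ⟨-, a2⟩
    · exact a2
    · rcases h' i with ⟨-, b2⟩ | ⟨-, b2⟩
      · exact b2
      · omega

def boolSign (b : Bool) : ℤ := bif b then -1 else 1

lemma boolSign_xor (a b : Bool) : boolSign (xor a b) = boolSign a * boolSign b := by
  cases a <;> cases b <;> rfl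

lemma boolSign_mul_self (b : Bool) : boolSign b * boolSign b = 1 := by cases b <;> rfl

lemma isUnit_boolSign (b : Bool) : IsUnit (boolSign b) := by
  cases b
  exacts [isUnit_one, isUnit_one.neg]

lemma boolSign_decide (p : Prop) [Decidable p] : boolSign (decide p) = if p then -1 else 1 := by
  by_cases hp : p <;> simp [boolSign, hp]

namespace Section7

instance (S : Section7) : NeZero S.n := ⟨by have := S.hn; omega⟩

variable (S : Section7)

def γ (i : ZMod S.n) : Zm 2 := S.aB (S.e i)

def δ (i : ZMod S.n) : ℤ := det2 (S.γ (i - 1)) (S.γ i)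

def kPrev (i : ZMod S.n) : ℤ := boolSign (decide (i = 0)) * S.k (i - 1)

def kProd (i : ZMod S.n) : ℤ := S.k i * S.kPrev i

/-- Sheet `false` consists of the edges `f i`, sheet `true` of the edges `h i`; the lift of
`e (-1)` leaves sheet `s` and arrives in sheet `!s`. -/
def bas (s : Bool) (i : ZMod S.n) : S.G.E := bif s then S.h i else S.f i

def vert (s : Bool) (i : ZMod S.n) : S.G.E := bif s then S.G.rev (S.g i) else S.g i

def pt (s : Bool) (i : ZMod S.n) : S.G.V := S.G.src (S.bas s i)

def prev (s : Bool) (i : ZMod S.n) : S.G.E := S.G.rev (S.bas (xor s (decide (i = 0))) (i - 1))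

variable {S}
variable (s : Bool) (i : ZMod S.n)

lemma isUnit_δ : IsUnit (S.δ i) := Int.isUnit_iff.mpr (S.delzant i)

lemma kPrev_ne_zero : S.kPrev i ≠ 0 :=
  mul_ne_zero (isUnit_boolSign _).ne_zero (S.k_ne _)

lemma aG_g : S.aG (S.g i) = S.k i • S.γ (i - 1) - S.kPrev i • S.γ i := by
  rw [S.fiberweight]
  by_cases hi : i = 0 <;> simp [kPrev, boolSign, γ, hi]

lemma dst_bas : S.G.dst (S.bas s i) = S.pt (xor s (decide (i + 1 = 0))) (i + 1) := by
  by_cases hi : i + 1 = 0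
  · obtain rfl : i = -1 := eq_neg_of_add_eq_zero_left hi
    cases s <;> simp [bas, pt, S.twist_f, S.twist_h]
  · cases s <;> simp [bas, pt, hi, S.chain_f i hi, S.chain_h i hi]

lemma src_vert : S.G.src (S.vert s i) = S.pt s i := by
  cases s
  · exact S.g_src i
  · rw [vert, cond_true, S.G.src_rev, S.g_dst]; rfl

lemma rev_vert : S.G.rev (S.vert s i) = S.vert (!s) i := by
  cases s <;> simp [vert, S.G.rev_rev]

lemma dst_vert : S.G.dst (S.vert s i) = S.pt (!s) i := by
  rw [← S.G.src_rev, rev_vert, src_vert]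

lemma src_prev : S.G.src (S.prev s i) = S.pt s i := by
  rw [prev, S.G.src_rev, dst_bas, sub_add_cancel]
  simp

lemma rev_bas : S.G.rev (S.bas s i) = S.prev (xor s (decide (i + 1 = 0))) (i + 1) := by
  simp [prev]

lemma rev_prev : S.G.rev (S.prev s i) = S.bas (xor s (decide (i = 0))) (i - 1) :=
  S.G.rev_rev _

lemma not_vertical_bas : ¬ S.π.Vertical (S.bas s i) := by
  cases s
  exacts [S.f_horiz i, S.h_horiz i]

lemma vertical_vert : S.π.Vertical (S.vert s i) := by
  cases s
  exacts [S.g_vert i, (S.π.vertical_rev_iff _).mpr (S.g_vert i)]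

lemma not_vertical_prev : ¬ S.π.Vertical (S.prev s i) := by
  rw [prev, S.π.vertical_rev_iff]
  exact not_vertical_bas _ _

variable {s i}

lemma aG_rev (e : S.G.E) : S.aG (S.G.rev e) = -S.aG e := by
  obtain ⟨-, -, _, hC⟩ := S.hG
  exact hC.2.2 e

variable (s i)

lemma aG_bas : S.aG (S.bas s i) = S.γ i := by
  obtain ⟨-, -, -, -, -, hlab, -⟩ := S.hfib
  rw [hlab _ (not_vertical_bas s i)]
  cases s
  · rw [bas, cond_false, S.f_over]; rfl
  · rw [bas, cond_true, S.h_over]; rfl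

lemma aG_vert : S.aG (S.vert s i) = boolSign s • S.aG (S.g i) := by
  cases s <;> simp [vert, boolSign, aG_rev]

lemma aG_prev : S.aG (S.prev s i) = -S.γ (i - 1) := by
  rw [prev, aG_rev, aG_bas]

lemma γ_ne_zero : S.γ i ≠ 0 := fun h =>
  (isUnit_δ i).ne_zero (by rw [δ, h]; simp [det2])

lemma bas_ne_vert (s' : Bool) : S.bas s i ≠ S.vert s' i := fun h =>
  not_vertical_bas s i (h ▸ vertical_vert s' i)

lemma vert_ne_prev (s' : Bool) : S.vert s i ≠ S.prev s' i := fun h =>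
  not_vertical_prev s' i (h ▸ vertical_vert s i)

lemma bas_ne_prev (s' : Bool) : S.bas s i ≠ S.prev s' i := by
  intro h
  have hδ : S.δ i = 0 := by
    have hγ := congrArg S.aG h
    rw [aG_bas, aG_prev] at hγ
    rw [δ, ← neg_neg (S.γ (i - 1)), ← hγ]
    simp
  exact (isUnit_δ i).ne_zero hδ

variable {s i}

lemma star {z : S.G.E} (hz : S.G.src z = S.pt s i) :
    z = S.bas s i ∨ z = S.vert s i ∨ z = S.prev s i :=
  OrGraph.eq_or_eq_or_eq_of_regular_three S.hG.1 (src_vert s i) (src_prev s i) hz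
    (bas_ne_vert s i s) (bas_ne_prev s i s) (vert_ne_prev s i s)

lemma exists_eq_pt (w : S.G.V) : ∃ s i, w = S.pt s i := by
  induction S.hG.2.1 (S.pt false 0) w with
  | refl => exact ⟨false, 0, rfl⟩
  | tail _ hadj ih =>
    obtain ⟨s, i, rfl⟩ := ih
    obtain ⟨z, hz, rfl⟩ := hadj
    rcases star hz with rfl | rfl | rfl
    · exact ⟨_, _, dst_bas s i⟩
    · exact ⟨_, _, dst_vert s i⟩
    · exact ⟨_, _, by rw [prev, S.G.dst_rev]; rfl⟩

lemma exists_eq_edge (z : S.G.E) :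
    ∃ s i, z = S.bas s i ∨ z = S.vert s i ∨ z = S.prev s i := by
  obtain ⟨s, i, hz⟩ := exists_eq_pt (S.G.src z)
  exact ⟨s, i, star hz⟩

lemma forall_edge {P : S.G.E → Prop} (hrev : ∀ e, P e → P (S.G.rev e))
    (hbas : ∀ s i, P (S.bas s i)) (hg : ∀ i, P (S.g i)) (z : S.G.E) : P z := by
  obtain ⟨s, i, rfl | rfl | rfl⟩ := exists_eq_edge z
  · exact hbas s i
  · cases s
    exacts [hg i, hrev _ (hg i)]
  · exact hrev _ (hbas _ _)

lemma onV_pt : S.π.onV (S.pt s i) = S.v i := by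
  have h := S.π.src_onE (S.bas s i) (not_vertical_bas s i)
  cases s
  · rw [bas, cond_false, S.f_over, S.src_e] at h; exact h.symm
  · rw [bas, cond_true, S.h_over, S.src_e] at h; exact h.symm

lemma pt_injective {s s' : Bool} {i i' : ZMod S.n} (h : S.pt s i = S.pt s' i') :
    s = s' ∧ i = i' := by
  obtain rfl : i = i' := S.v_bij.1 (by rw [← onV_pt, ← onV_pt, h])
  refine ⟨?_, rfl⟩
  by_contra hs
  have hother : S.G.src (S.bas (!s) i) = S.pt s i := by
    obtain rfl : (!s) = s' := by cases s <;> cases s' <;> simp_all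
    exact h.symm
  rcases star hother with h1 | h1 | h1
  · cases s
    exacts [(S.f_ne_h i) h1.symm, (S.f_ne_h i) h1]
  · exact bas_ne_vert _ i s h1
  · exact bas_ne_prev _ i s h1

lemma bas_ne_rev_bas (s' : Bool) (j : ZMod S.n) : S.bas s i ≠ S.G.rev (S.bas s' j) := by
  rw [rev_bas]
  intro h
  obtain ⟨hs, hi⟩ := pt_injective
    (show S.pt s i = S.pt (xor s' (decide (j + 1 = 0))) (j + 1) by rw [pt, h, src_prev])
  rw [← hs, ← hi] at h
  exact bas_ne_prev _ _ _ h

variable (s i)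

lemma det2_g_γ : det2 (S.aG (S.g i)) (S.γ i) = S.k i * S.δ i := by
  simp only [aG_g, δ, det2_sub_left, det2_smul_left, det2_self]; ring

lemma det2_γ_g : det2 (S.γ i) (S.aG (S.g i)) = -(S.k i * S.δ i) := by
  rw [det2_swap, det2_g_γ]

lemma det2_γ_sub_one_g : det2 (S.γ (i - 1)) (S.aG (S.g i)) = -(S.kPrev i * S.δ i) := by
  simp only [aG_g, δ, det2_sub_right, det2_smul_right, det2_self]; ring

lemma det2_vert_γ : det2 (S.aG (S.vert s i)) (S.γ i) = boolSign s * (S.k i * S.δ i) := by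
  rw [aG_vert, det2_smul_left, det2_g_γ]

lemma det2_vert_add_one_γ :
    det2 (S.aG (S.vert (xor s (decide (i + 1 = 0))) (i + 1))) (S.γ i) =
      boolSign s * (S.k i * S.δ (i + 1)) := by
  simp only [aG_vert, aG_g, kPrev, δ, add_sub_cancel_right, det2_smul_left, det2_sub_left,
    det2_self, boolSign_xor]
  rw [det2_swap (S.γ (i + 1))]
  linear_combination (boolSign s * S.k i * det2 (S.γ i) (S.γ (i + 1))) *
    boolSign_mul_self (decide (i + 1 = 0))

lemma det2_prev_γ : det2 (S.aG (S.prev s i)) (S.γ i) = -S.δ i := by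
  simp [aG_prev, δ]

lemma det2_bas_add_one_γ : det2 (S.aG (S.bas s (i + 1))) (S.γ i) = -S.δ (i + 1) := by
  rw [aG_bas, δ, add_sub_cancel_right, det2_swap]

/-- The original connection carries `g i` along `f i` to a vertical edge; comparing the
determinants with `γ i` before and after transport shows `δ` is constant. -/
lemma δ_add_one : S.δ (i + 1) = S.δ i := by
  obtain ⟨-, C, -, hC, -, -, hvert, -⟩ := S.hfib
  have hx : S.G.src (S.vert false i) = S.G.src (S.bas false i) := src_vert false i
  have ht : C.t (S.bas false i) (S.vert false i) =
      S.vert (xor false (decide (i + 1 = 0))) (i + 1) := by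
    have hv := hvert _ _ hx (vertical_vert false i)
    rcases star ((C.src_t _ _ hx).trans (dst_bas false i)) with h | h | h
    · exact absurd (h ▸ hv) (not_vertical_bas _ _)
    · exact h
    · exact absurd (h ▸ hv) (not_vertical_prev _ _)
  have h := hC.det2_transport hx
  rw [ht, aG_bas, det2_vert_add_one_γ, det2_vert_γ] at h
  exact mul_left_cancel₀ (S.k_ne i) (by simpa [boolSign] using h)

lemma aG_ne_zero (e : S.G.E) : S.aG e ≠ 0 := by
  refine forall_edge (P := fun e => S.aG e ≠ 0) (fun e he => by rwa [aG_rev, neg_ne_zero])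
    (fun s i => by rw [aG_bas]; exact γ_ne_zero i) (fun i h => ?_) e
  have := det2_g_γ i
  rw [h] at this
  exact mul_ne_zero (S.k_ne i) (isUnit_δ i).ne_zero (by simpa [det2] using this.symm)

inductive Slot
  | bas | vert | prev

variable (S) in
def edgeAt : Slot × Bool × ZMod S.n → S.G.E
  | (.bas, s, i) => S.bas s i
  | (.vert, s, i) => S.vert s i
  | (.prev, s, i) => S.prev s i

lemma src_edgeAt (t : Slot) : S.G.src (S.edgeAt (t, s, i)) = S.pt s i := by
  cases t
  exacts [rfl, src_vert s i, src_prev s i]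

lemma edgeAt_bijective : Function.Bijective S.edgeAt := by
  constructor
  · rintro ⟨t, s, i⟩ ⟨t', s', i'⟩ h
    obtain ⟨rfl, rfl⟩ := pt_injective
      (show S.pt s i = S.pt s' i' by rw [← src_edgeAt s i t, h, src_edgeAt])
    cases t <;> cases t' <;> simp only [edgeAt] at h
    all_goals first
      | rfl
      | exact absurd h (bas_ne_vert _ _ _) | exact absurd h.symm (bas_ne_vert _ _ _)
      | exact absurd h (bas_ne_prev _ _ _) | exact absurd h.symm (bas_ne_prev _ _ _)
      | exact absurd h (vert_ne_prev _ _ _) | exact absurd h.symm (vert_ne_prev _ _ _)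
  · intro z
    obtain ⟨s, i, h | h | h⟩ := exists_eq_edge z
    exacts [⟨(.bas, s, i), h.symm⟩, ⟨(.vert, s, i), h.symm⟩, ⟨(.prev, s, i), h.symm⟩]

lemma pt_bijective : Function.Bijective fun x : Bool × ZMod S.n => S.pt x.1 x.2 :=
  ⟨fun _ _ h => Prod.ext_iff.mpr (pt_injective h),
    fun w => (exists_eq_pt w).elim fun s ⟨i, h⟩ => ⟨(s, i), h.symm⟩⟩

variable (S) in
noncomputable def flipE : S.G.E ≃ S.G.E :=
  (Equiv.ofBijective _ edgeAt_bijective).permCongr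
    ((Equiv.refl Slot).prodCongr (Equiv.boolNot.prodCongr (Equiv.refl _)))

variable (S) in
noncomputable def flipV : S.G.V ≃ S.G.V :=
  (Equiv.ofBijective _ pt_bijective).permCongr (Equiv.boolNot.prodCongr (Equiv.refl _))

lemma flipE_edgeAt (t : Slot) : S.flipE (S.edgeAt (t, s, i)) = S.edgeAt (t, !s, i) := by
  simp [flipE, Equiv.permCongr_apply]

lemma flipV_pt : S.flipV (S.pt s i) = S.pt (!s) i := by
  change S.flipV (Equiv.ofBijective _ pt_bijective (s, i)) = _
  rw [flipV, Equiv.permCongr_apply, Equiv.symm_apply_apply]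
  rfl

lemma src_flipE (z : S.G.E) : S.G.src (S.flipE z) = S.flipV (S.G.src z) := by
  obtain ⟨⟨t, s, i⟩, rfl⟩ := edgeAt_bijective.2 z
  rw [flipE_edgeAt, src_edgeAt, src_edgeAt, flipV_pt]

lemma flipE_rev (z : S.G.E) : S.flipE (S.G.rev z) = S.G.rev (S.flipE z) := by
  obtain ⟨⟨t, s, i⟩, rfl⟩ := edgeAt_bijective.2 z
  rw [flipE_edgeAt]
  cases t
  · change S.flipE (S.G.rev (S.bas s i)) = S.G.rev (S.bas (!s) i)
    rw [rev_bas, rev_bas, Bool.not_xor]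
    exact flipE_edgeAt _ _ .prev
  · change S.flipE (S.G.rev (S.vert s i)) = S.G.rev (S.vert (!s) i)
    rw [rev_vert, rev_vert]
    exact flipE_edgeAt _ _ .vert
  · change S.flipE (S.G.rev (S.prev s i)) = S.G.rev (S.prev (!s) i)
    rw [rev_prev, rev_prev, Bool.not_xor]
    exact flipE_edgeAt _ _ .bas

lemma flipE_bas : S.flipE (S.bas s i) = S.bas (!s) i := flipE_edgeAt s i .bas

lemma flipE_g : S.flipE (S.g i) = S.G.rev (S.g i) := flipE_edgeAt false i .vert

lemma nonempty_signedGKMIso_of_flipE {α β : S.G.E → Zm 2} {u : ℤ} (hu : IsUnit u)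
    (h : ∀ e, β (S.flipE e) = u • α e) : Nonempty (SignedGKMIso S.G α S.G β) :=
  ⟨{ fV := S.flipV
     fE := S.flipE
     φ := LinearEquiv.smulOfUnit hu.unit
     src_comm := src_flipE
     dst_comm := fun e => by rw [← S.G.src_rev, ← flipE_rev, src_flipE, S.G.src_rev]
     rev_comm := flipE_rev
     lab := fun e => h e }⟩

lemma eq_of_bas_eq_bas {s s' : Bool} {i j : ZMod S.n} (h : S.bas s i = S.bas s' j) : i = j :=
  (pt_injective (congrArg S.G.src h)).2

lemma alphaII_bas : S.alphaII (S.bas s i) = altSign i • S.γ i := by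
  unfold alphaII
  by_cases hi : Odd i.val
  · rw [if_pos ⟨i, hi, by cases s <;> simp [bas]⟩, aG_bas, altSign, if_pos hi, neg_one_smul]
  · rw [if_neg, aG_bas, altSign, if_neg hi, one_smul]
    rintro ⟨j, hj, h | h | h | h⟩
    · exact hi (eq_of_bas_eq_bas (s' := false) h ▸ hj)
    · exact hi (eq_of_bas_eq_bas (s' := true) h ▸ hj)
    · exact bas_ne_rev_bas false j h
    · exact bas_ne_rev_bas true j h

lemma alphaII_g : S.alphaII (S.g i) = S.aG (S.g i) := by
  unfold alphaII
  rw [if_neg]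
  have hv := S.g_vert i
  rintro ⟨j, -, h | h | h | h⟩ <;> rw [h] at hv
  · exact not_vertical_bas false j hv
  · exact not_vertical_bas true j hv
  · exact not_vertical_bas false j ((S.π.vertical_rev_iff _).mp hv)
  · exact not_vertical_bas true j ((S.π.vertical_rev_iff _).mp hv)

lemma alphaII_rev (e : S.G.E) : S.alphaII (S.G.rev e) = -S.alphaII e := by
  have hP : (∃ i : ZMod S.n, Odd i.val ∧ (S.G.rev e = S.f i ∨ S.G.rev e = S.h i ∨
      S.G.rev e = S.G.rev (S.f i) ∨ S.G.rev e = S.G.rev (S.h i))) ↔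
      ∃ i : ZMod S.n, Odd i.val ∧
        (e = S.f i ∨ e = S.h i ∨ e = S.G.rev (S.f i) ∨ e = S.G.rev (S.h i)) := by
    simp only [OrGraph.rev_eq_iff, OrGraph.rev_rev]
    exact exists_congr fun i => and_congr_right fun _ => by tauto
  unfold alphaII
  simp only [hP, aG_rev]
  split_ifs <;> rfl

variable {s i}

lemma aG_vert_of_kPrev_eq_neg (hkp : ∀ i, S.kPrev i = -S.k i) (s : Bool) (i : ZMod S.n) :
    S.aG (S.vert s i) = (boolSign s * S.k i) • (S.γ (i - 1) + S.γ i) := by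
  rw [aG_vert, aG_g, hkp]
  module

lemma not_interiorVtx_of_kPrev_eq_neg (hk : ∀ i, IsUnit (S.k i))
    (hkp : ∀ i, S.kPrev i = -S.k i) (p : S.G.V) : ¬ InteriorVtx S.G S.aG p := by
  obtain ⟨s, i, rfl⟩ := exists_eq_pt p
  obtain ⟨u, w, hw, hy, hxy, hx⟩ := exists_det2_halfplane (x := S.γ (i - 1)) (y := S.γ i)
    (isUnit_δ i) ((isUnit_boolSign s).mul (hk i))
  refine not_interiorVtx_of_det2_nonneg hw fun z hz => ?_
  rcases star hz with rfl | rfl | rfl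
  · rwa [aG_bas]
  · rwa [aG_vert_of_kPrev_eq_neg hkp]
  · rwa [aG_prev]

variable (S) in
lemma exists_interiorVtx : ∃ p, InteriorVtx S.G S.aG p := by
  have hpos : 0 < Nat.card {p // InteriorVtx S.G S.aG p} := by
    rw [S.interior_count]; have := S.hn; omega
  obtain ⟨⟨p, hp⟩⟩ := (Nat.card_pos_iff.mp hpos).1
  exact ⟨p, hp⟩

/-- A constant `kProd` would have to be `-1`, since `∏ kProd = -(∏ k) ^ 2` by the twist;
then no vertex could be interior. -/
lemma not_forall_kProd_eq (hk : ∀ i, IsUnit (S.k i)) : ¬ ∀ i, S.kProd (i + 1) = S.kProd i := by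
  intro hconst
  have hksq : ∀ i, S.k i * S.k i = 1 := fun i => Int.isUnit_mul_self (hk i)
  have hprod : ∏ i, S.kProd i = -1 := by
    have hsign : ∏ i : ZMod S.n, boolSign (decide (i = 0)) = -1 := by
      simp [boolSign_decide, Finset.prod_ite_eq']
    simp only [kProd, kPrev, Finset.prod_mul_distrib, ZMod.prod_sub_one S.k, hsign]
    rw [neg_one_mul, mul_neg, ← Finset.prod_mul_distrib, Finset.prod_eq_one fun i _ => hksq i]
  have hr : S.kProd 0 = -1 := by
    rw [Finset.prod_congr rfl fun i _ => ZMod.eq_apply_zero_of_add_one hconst i, Finset.prod_const,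
      Finset.card_univ, ZMod.card] at hprod
    rcases Int.isUnit_iff.mp ((hk 0).mul ((isUnit_boolSign _).mul (hk (0 - 1)))) with h | h
    · rw [kProd, kPrev, h, one_pow] at hprod
      norm_num at hprod
    · exact h
  obtain ⟨p, hp⟩ := S.exists_interiorVtx
  refine not_interiorVtx_of_kPrev_eq_neg hk (fun i => ?_) p hp
  have h := (ZMod.eq_apply_zero_of_add_one hconst i).trans hr
  unfold kProd at h
  linear_combination S.k i * h - S.kPrev i * hksq i

variable (S) in
/-- A compatible signed structure on `Γ` inducing the unsigned labels of `aG`, together with its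
signs relative to `aG`. -/
structure SignedLift where
  α : S.G.E → Zm 2
  C : Connection S.G
  compat : SignedCompat S.G α C
  σ : S.G.E → ℤ
  isUnit_σ : ∀ e, IsUnit (σ e)
  α_eq : ∀ e, α e = σ e • S.aG e

lemma exists_signedLift {α' : S.G.E → Zm 2} (hcompat : ∃ C, SignedCompat S.G α' C)
    (hsame : ∀ e, pm (α' e) = pm (S.aG e)) : ∃ X : S.SignedLift, X.α = α' := by
  obtain ⟨C, hC⟩ := hcompat
  have hpm : ∀ e, α' e = S.aG e ∨ α' e = -S.aG e := fun e => Quotient.exact (hsame e)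
  refine ⟨⟨α', C, hC, fun e => if α' e = S.aG e then 1 else -1, fun e => ?_, fun e => ?_⟩, rfl⟩
  · split_ifs <;> simp
  · split_ifs with h
    · rw [h, one_smul]
    · rw [(hpm e).resolve_left h, neg_one_smul]

namespace SignedLift

variable (X : S.SignedLift)

lemma α_rev (e : S.G.E) : X.α (S.G.rev e) = -X.α e := X.compat.2.2 e

lemma σ_mul_self (e : S.G.E) : X.σ e * X.σ e = 1 := Int.isUnit_mul_self (X.isUnit_σ e)

lemma σ_rev (e : S.G.E) : X.σ (S.G.rev e) = X.σ e := by
  have h := X.α_rev e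
  rw [X.α_eq, X.α_eq, aG_rev, smul_neg, neg_inj] at h
  exact smul_left_injective ℤ (aG_ne_zero e) h

lemma σ_vert (s : Bool) (i : ZMod S.n) : X.σ (S.vert s i) = X.σ (S.g i) := by
  cases s
  exacts [rfl, X.σ_rev _]

lemma σ_prev (s : Bool) (i : ZMod S.n) :
    X.σ (S.prev s i) = X.σ (S.bas (xor s (decide (i = 0))) (i - 1)) :=
  X.σ_rev _

lemma σ_mul_det2_transport {e x : S.G.E} (hx : S.G.src x = S.G.src e) :
    X.σ (X.C.t e x) * det2 (S.aG (X.C.t e x)) (S.aG e) = X.σ x * det2 (S.aG x) (S.aG e) := by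
  have h := X.compat.det2_transport hx
  rw [X.α_eq, X.α_eq, X.α_eq, det2_smul_left, det2_smul_right, det2_smul_left,
    det2_smul_right] at h
  exact mul_left_cancel₀ (X.isUnit_σ e).ne_zero (by linear_combination h)

lemma vertical_cases (i : ZMod S.n) :
    (X.σ (S.bas true i) = X.σ (S.bas false i) ∧ X.σ (S.prev true i) = X.σ (S.prev false i)) ∨
    (IsUnit (S.k i) ∧ X.σ (S.prev true i) * S.kPrev i = -(X.σ (S.bas false i) * S.k i) ∧
      X.σ (S.bas true i) * S.k i = -(X.σ (S.prev false i) * S.kPrev i)) := by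
  have hx : S.G.src (S.bas false i) = S.G.src (S.g i) := (S.g_src i).symm
  have hy : S.G.src (S.prev false i) = S.G.src (S.g i) := (src_prev false i).trans hx
  have hstar : ∀ z, S.G.src z = S.G.dst (S.g i) →
      z = S.G.rev (S.g i) ∨ z = S.bas true i ∨ z = S.prev true i := fun z hz => by
    rw [S.g_dst] at hz
    rcases star (s := true) hz with h | h | h
    exacts [Or.inr (Or.inl h), Or.inl h, Or.inr (Or.inr h)]
  have hδ := (isUnit_δ i).ne_zero
  have ex := X.σ_mul_det2_transport hx
  have ey := X.σ_mul_det2_transport hy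
  rcases X.C.t_eq_or_t_eq hx hy (bas_ne_vert false i false) (vert_ne_prev false i false).symm
    (bas_ne_prev false i false) hstar with ⟨h1, h2⟩ | ⟨h1, h2⟩
  · left
    rw [h1, aG_bas, aG_bas, det2_γ_g] at ex
    rw [h2, aG_prev, aG_prev, det2_neg_left, det2_γ_sub_one_g] at ey
    exact ⟨mul_right_cancel₀ (mul_ne_zero (S.k_ne i) hδ) (by linear_combination -ex),
      mul_right_cancel₀ (mul_ne_zero (kPrev_ne_zero i) hδ) (by linear_combination ey)⟩
  · right
    obtain ⟨c, hc⟩ := X.compat.exists_det2_transport hx (S.γ i)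
    rw [h1, X.α_eq, X.α_eq, X.α_eq, det2_smul_left, det2_smul_left, det2_smul_left, aG_prev,
      aG_bas, det2_neg_left, det2_self, det2_g_γ] at hc
    have hdvd : X.σ (S.prev true i) = S.k i * -(c * X.σ (S.g i)) :=
      mul_right_cancel₀ hδ (by rw [δ] at *; linear_combination -hc)
    rw [h1, aG_prev, aG_bas, det2_neg_left, det2_γ_sub_one_g, det2_γ_g] at ex
    rw [h2, aG_bas, aG_prev, det2_neg_left, det2_γ_sub_one_g, det2_γ_g] at ey
    exact ⟨isUnit_of_dvd_unit ⟨_, hdvd⟩ (X.isUnit_σ _),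
      mul_right_cancel₀ hδ (by linear_combination ex),
      mul_right_cancel₀ hδ (by linear_combination -ey)⟩

lemma horizontal_cases (s : Bool) (i : ZMod S.n) :
    (X.σ (S.g (i + 1)) = X.σ (S.g i) ∧
      X.σ (S.bas (xor s (decide (i + 1 = 0))) (i + 1)) = X.σ (S.prev s i)) ∨
    (X.σ (S.bas (xor s (decide (i + 1 = 0))) (i + 1)) = -(boolSign s * S.k i * X.σ (S.g i)) ∧
      boolSign s * S.k i * X.σ (S.g (i + 1)) = -X.σ (S.prev s i)) := by
  have hx : S.G.src (S.vert s i) = S.G.src (S.bas s i) := src_vert s i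
  have hy : S.G.src (S.prev s i) = S.G.src (S.bas s i) := src_prev s i
  have hstar : ∀ z, S.G.src z = S.G.dst (S.bas s i) → z = S.G.rev (S.bas s i) ∨
      z = S.vert (xor s (decide (i + 1 = 0))) (i + 1) ∨
      z = S.bas (xor s (decide (i + 1 = 0))) (i + 1) := fun z hz => by
    rw [dst_bas] at hz
    rw [rev_bas]
    rcases star hz with h | h | h
    exacts [Or.inr (Or.inr h), Or.inr (Or.inl h), Or.inl h]
  have hδ := (isUnit_δ i).ne_zero
  have hskδ : boolSign s * (S.k i * S.δ i) ≠ 0 :=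
    mul_ne_zero (isUnit_boolSign s).ne_zero (mul_ne_zero (S.k_ne i) hδ)
  have ex := X.σ_mul_det2_transport hx
  have ey := X.σ_mul_det2_transport hy
  rcases X.C.t_eq_or_t_eq hx hy (bas_ne_vert s i s).symm (bas_ne_prev s i s).symm
    (vert_ne_prev s i s) hstar with ⟨h1, h2⟩ | ⟨h1, h2⟩
  · left
    rw [h1, aG_bas s i, det2_vert_add_one_γ, δ_add_one, det2_vert_γ, X.σ_vert, X.σ_vert] at ex
    rw [h2, aG_bas s i, det2_bas_add_one_γ, δ_add_one, det2_prev_γ] at ey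
    exact ⟨mul_right_cancel₀ hskδ ex, mul_right_cancel₀ hδ (by linear_combination -ey)⟩
  · right
    rw [h1, aG_bas s i, det2_bas_add_one_γ, δ_add_one, det2_vert_γ, X.σ_vert] at ex
    rw [h2, aG_bas s i, det2_vert_add_one_γ, δ_add_one, det2_prev_γ, X.σ_vert] at ey
    exact ⟨mul_right_cancel₀ hδ (by linear_combination -ex),
      mul_right_cancel₀ hδ (by linear_combination ey)⟩

lemma σ_bas_mul_σ_bas (i : ZMod S.n) :
    X.σ (S.bas false i) * X.σ (S.bas true i) = X.σ (S.bas false 0) * X.σ (S.bas true 0) := by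
  refine ZMod.eq_apply_zero_of_add_one (f := fun i => X.σ (S.bas false i) * X.σ (S.bas true i))
    (fun i => ?_) i
  have hprev : X.σ (S.prev false (i + 1)) * X.σ (S.prev true (i + 1)) =
      X.σ (S.bas false i) * X.σ (S.bas true i) := by
    rw [X.σ_prev, X.σ_prev, add_sub_cancel_right]
    cases decide (i + 1 = 0) <;> simp [mul_comm]
  rw [← hprev]
  rcases X.vertical_cases (i + 1) with ⟨h1, h2⟩ | ⟨-, h1, h2⟩
  · rw [h1, h2, X.σ_mul_self, X.σ_mul_self]
  · set bf := X.σ (S.bas false (i + 1))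
    set bt := X.σ (S.bas true (i + 1))
    set pf := X.σ (S.prev false (i + 1))
    set pt := X.σ (S.prev true (i + 1))
    have H : pt * bt = bf * pf :=
      mul_right_cancel₀ (mul_ne_zero (kPrev_ne_zero (i + 1)) (S.k_ne (i + 1)))
        (by linear_combination (bt * S.k (i + 1)) * h1 + (-(bf * S.k (i + 1))) * h2)
    linear_combination (-(bt * pf)) * H + (pt * pf) * X.σ_mul_self (S.bas true (i + 1)) -
      (bf * bt) * X.σ_mul_self (S.prev false (i + 1))

lemma aligned_or_anti : (∀ i, X.σ (S.bas true i) = X.σ (S.bas false i)) ∨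
    (∀ i, X.σ (S.bas true i) = -X.σ (S.bas false i)) := by
  rcases Int.isUnit_iff.mp ((X.isUnit_σ (S.bas false 0)).mul (X.isUnit_σ (S.bas true 0)))
    with h | h
  · refine Or.inl fun i => ?_
    linear_combination X.σ (S.bas false i) * (X.σ_bas_mul_σ_bas i).trans h -
      X.σ (S.bas true i) * X.σ_mul_self (S.bas false i)
  · refine Or.inr fun i => ?_
    linear_combination X.σ (S.bas false i) * (X.σ_bas_mul_σ_bas i).trans h -
      X.σ (S.bas true i) * X.σ_mul_self (S.bas false i)

lemma anti_of_α_f_ne_α_h (h : ∀ i, X.α (S.f i) ≠ X.α (S.h i)) :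
    ∀ i, X.σ (S.bas true i) = -X.σ (S.bas false i) := by
  refine X.aligned_or_anti.resolve_left fun hal => h 0 ?_
  change X.α (S.bas false 0) = X.α (S.bas true 0)
  rw [X.α_eq, X.α_eq, aG_bas, aG_bas, hal]

lemma nonempty_iso_of_signs {T : S.G.E → Zm 2} (hTrev : ∀ e, T (S.G.rev e) = -T e)
    {ρ : ZMod S.n → ℤ} (hTbas : ∀ s i, T (S.bas s i) = ρ i • S.γ i)
    (hTg : ∀ i, T (S.g i) = S.aG (S.g i)) {u : ℤ} (hu : IsUnit u)
    (hbas : ∀ s i, X.σ (S.bas s i) = u * ρ i) (hg : ∀ i, X.σ (S.g i) = X.σ (S.g 0)) :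
    Nonempty (SignedGKMIso S.G X.α S.G T) := by
  have hu2 := Int.isUnit_mul_self hu
  rcases Int.isUnit_eq_or_eq_neg (X.isUnit_σ (S.g 0)) hu with hc | hc
  · refine nonempty_signedGKMIso_of_smul hu (forall_edge (P := fun e => T e = u • X.α e)
      (fun e he => by rw [hTrev, he, X.α_rev, smul_neg]) (fun s i => ?_) (fun i => ?_))
    · rw [hTbas, X.α_eq, hbas, aG_bas, smul_smul, ← mul_assoc, hu2, one_mul]
    · rw [hTg, X.α_eq, hg, hc, smul_smul, hu2, one_smul]
  · refine nonempty_signedGKMIso_of_flipE hu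
      (forall_edge (P := fun e => T (S.flipE e) = u • X.α e)
        (fun e he => by rw [flipE_rev, hTrev, he, X.α_rev, smul_neg]) (fun s i => ?_) (fun i => ?_))
    · rw [flipE_bas, hTbas, X.α_eq, hbas, aG_bas, smul_smul, ← mul_assoc, hu2, one_mul]
    · rw [flipE_g, hTrev, hTg, X.α_eq, hg, hc, smul_smul, mul_neg, hu2, neg_one_smul]

section Aligned

variable (hal : ∀ i, X.σ (S.bas true i) = X.σ (S.bas false i))
include hal

lemma σ_bas_of_aligned (s : Bool) (i : ZMod S.n) : X.σ (S.bas s i) = X.σ (S.bas false i) := by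
  cases s
  exacts [rfl, hal i]

lemma σ_add_one_of_aligned (i : ZMod S.n) :
    X.σ (S.g (i + 1)) = X.σ (S.g i) ∧ X.σ (S.bas false (i + 1)) = X.σ (S.bas false (i - 1)) := by
  have hprev : ∀ s, X.σ (S.prev s i) = X.σ (S.bas false (i - 1)) := fun s => by
    rw [σ_prev, X.σ_bas_of_aligned hal]
  rcases X.horizontal_cases false i with ⟨h1, h2⟩ | ⟨h1, -⟩
  · exact ⟨h1, ((X.σ_bas_of_aligned hal _ _).symm.trans h2).trans (hprev false)⟩
  rcases X.horizontal_cases true i with ⟨h1', h2'⟩ | ⟨h1', -⟩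
  · exact ⟨h1', ((X.σ_bas_of_aligned hal _ _).symm.trans h2').trans (hprev true)⟩
  rw [X.σ_bas_of_aligned hal] at h1 h1'
  have h0 : S.k i * X.σ (S.g i) = 0 := by
    simp only [boolSign, cond_false, cond_true] at h1 h1'
    linarith
  exact absurd h0 (mul_ne_zero (S.k_ne i) (X.isUnit_σ _).ne_zero)

lemma nonempty_iso_of_aligned :
    Nonempty (SignedGKMIso S.G X.α S.G S.aG) ∨
      (Even S.n ∧ Nonempty (SignedGKMIso S.G X.α S.G S.alphaII)) := by
  have hg := ZMod.eq_apply_zero_of_add_one (f := fun i => X.σ (S.g i)) fun i =>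
    (X.σ_add_one_of_aligned hal i).1
  rcases eq_const_or_alternating (fun i => X.isUnit_σ _) (fun i => (X.σ_add_one_of_aligned hal i).2)
    with ha | ⟨heven, ha⟩
  · refine Or.inl (X.nonempty_iso_of_signs aG_rev (ρ := fun _ => 1)
      (fun s i => by rw [aG_bas, one_smul]) (fun i => rfl) (X.isUnit_σ (S.bas false 0))
      (fun s i => ?_) hg)
    rw [X.σ_bas_of_aligned hal, ha, mul_one]
  · refine Or.inr ⟨heven, X.nonempty_iso_of_signs alphaII_rev alphaII_bas alphaII_g
      (X.isUnit_σ (S.bas false 0)) (fun s i => ?_) hg⟩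
    rw [X.σ_bas_of_aligned hal, ha, mul_comm]

end Aligned

section Anti

variable (hanti : ∀ i, X.σ (S.bas true i) = -X.σ (S.bas false i))
include hanti

lemma σ_bas_of_anti (s : Bool) (i : ZMod S.n) :
    X.σ (S.bas s i) = boolSign s * X.σ (S.bas false i) := by
  cases s
  · exact (one_mul _).symm
  · rw [hanti, boolSign, cond_true, neg_one_mul]

lemma isUnit_k_of_anti (i : ZMod S.n) :
    IsUnit (S.k i) ∧ X.σ (S.bas false i) * S.k i = X.σ (S.bas false (i - 1)) * S.k (i - 1) := by
  rcases X.vertical_cases i with ⟨h1, -⟩ | ⟨hk, h1, -⟩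
  · rw [hanti] at h1
    exact absurd (by linarith) (X.isUnit_σ (S.bas false i)).ne_zero
  · refine ⟨hk, ?_⟩
    rw [σ_prev, X.σ_bas_of_anti hanti, kPrev, boolSign_xor, show boolSign true = -1 from rfl] at h1
    linear_combination h1 + (X.σ (S.bas false (i - 1)) * S.k (i - 1)) *
      boolSign_mul_self (decide (i = 0))

lemma α_f_ne_α_h (i : ZMod S.n) : X.α (S.f i) ≠ X.α (S.h i) := by
  change X.α (S.bas false i) ≠ X.α (S.bas true i)
  rw [X.α_eq, X.α_eq, hanti, aG_bas, aG_bas]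
  intro h
  have := smul_left_injective ℤ (γ_ne_zero i) h
  exact (X.isUnit_σ (S.bas false i)).ne_zero (by linarith)

lemma σ_bas_false_of_anti (i : ZMod S.n) :
    X.σ (S.bas false i) = X.σ (S.bas false 0) * S.k 0 * S.k i := by
  have h := ZMod.eq_apply_zero_of_add_one (f := fun i => X.σ (S.bas false i) * S.k i) (fun i => by
    have h := (X.isUnit_k_of_anti hanti (i + 1)).2
    rwa [add_sub_cancel_right] at h) i
  linear_combination S.k i * h - X.σ (S.bas false i) *
    Int.isUnit_mul_self (X.isUnit_k_of_anti hanti i).1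

lemma stepOrSwap_of_anti (i : ZMod S.n) :
    StepOrSwap (fun j => X.σ (S.bas false 0) * S.k 0 * X.σ (S.g j)) (fun j => -S.kProd j) i := by
  set ε := X.σ (S.bas false 0) * S.k 0
  have hε : ε * ε = 1 :=
    Int.isUnit_mul_self ((X.isUnit_σ _).mul (X.isUnit_k_of_anti hanti 0).1)
  have hk : S.k i * S.k i = 1 := Int.isUnit_mul_self (X.isUnit_k_of_anti hanti i).1
  have hbas : ∀ s j, X.σ (S.bas s j) = boolSign s * (ε * S.k j) := fun s j => by
    rw [X.σ_bas_of_anti hanti, X.σ_bas_false_of_anti hanti]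
  have hprev : X.σ (S.prev false i) = boolSign (decide (i = 0)) * (ε * S.k (i - 1)) := by
    rw [σ_prev, hbas, Bool.false_xor]
  simp only [StepOrSwap, kProd, kPrev, add_sub_cancel_right]
  rcases X.horizontal_cases false i with ⟨h1, h2⟩ | ⟨h1, h2⟩
  · refine Or.inl ⟨by rw [h1], ?_⟩
    rw [hbas, hprev, Bool.false_xor] at h2
    linear_combination (-(ε * S.k i)) * h2 +
      (S.k i * boolSign (decide (i + 1 = 0)) * S.k (i + 1) -
        S.k i * boolSign (decide (i = 0)) * S.k (i - 1)) * hε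
  · refine Or.inr ⟨?_, ?_⟩
    · rw [hprev, show boolSign false = 1 from rfl] at h2
      linear_combination (ε * S.k i) * h2 - (ε * X.σ (S.g (i + 1))) * hk -
        (S.k i * boolSign (decide (i = 0)) * S.k (i - 1)) * hε
    · rw [hbas, Bool.false_xor, show boolSign false = 1 from rfl] at h1
      linear_combination (-(ε * S.k i)) * h1 +
        (boolSign (decide (i + 1 = 0)) * S.k i * S.k (i + 1)) * hε + (ε * X.σ (S.g i)) * hk

lemma nonempty_iso_of_anti (Y : S.SignedLift)
    (hY : ∀ i, Y.σ (S.bas true i) = -Y.σ (S.bas false i)) :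
    Nonempty (SignedGKMIso S.G X.α S.G Y.α) := by
  set εX := X.σ (S.bas false 0) * S.k 0
  set εY := Y.σ (S.bas false 0) * S.k 0
  have hk := fun i => (X.isUnit_k_of_anti hanti i).1
  have hεX : IsUnit εX := (X.isUnit_σ _).mul (hk 0)
  have hεY : IsUnit εY := (Y.isUnit_σ _).mul (hk 0)
  have hd := eq_of_stepOrSwap (fun h => not_forall_kProd_eq hk fun i => neg_inj.mp (h i))
    (fun i => hεX.mul (X.isUnit_σ _)) (fun i => hεY.mul (Y.isUnit_σ _))
    (X.stepOrSwap_of_anti hanti) (Y.stepOrSwap_of_anti hY)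
  refine nonempty_signedGKMIso_of_smul (hεX.mul hεY)
    (forall_edge (P := fun e => Y.α e = (εX * εY) • X.α e)
      (fun e he => by rw [Y.α_rev, X.α_rev, he, smul_neg]) (fun s i => ?_) (fun i => ?_))
  · rw [Y.α_eq, X.α_eq, smul_smul, Y.σ_bas_of_anti hY, Y.σ_bas_false_of_anti hY,
      X.σ_bas_of_anti hanti, X.σ_bas_false_of_anti hanti]
    congr 1
    linear_combination (-(boolSign s * εY * S.k i)) * Int.isUnit_mul_self hεX
  · rw [Y.α_eq, X.α_eq, smul_smul]
    congr 1
    linear_combination εY * congrFun hd i - Y.σ (S.g i) * Int.isUnit_mul_self hεY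

end Anti

end SignedLift

end Section7

theorem statement18_general (S : Section7)
    (α' : S.G.E → Zm 2)
    (hcompat : ∃ C : Connection S.G, SignedCompat S.G α' C)
    (hsame : ∀ ed, pm (α' ed) = pm (S.aG ed)) :
    Nonempty (SignedGKMIso S.G α' S.G S.aG) ∨
    (Even S.n ∧ Nonempty (SignedGKMIso S.G α' S.G S.alphaII)) ∨
    ((∀ i, S.k i = 1 ∨ S.k i = -1) ∧
      (∀ i, α' (S.f i) ≠ α' (S.h i)) ∧
      ∀ α'' : S.G.E → Zm 2, (∃ C : Connection S.G, SignedCompat S.G α'' C) →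
        (∀ ed, pm (α'' ed) = pm (S.aG ed)) → (∀ i, α'' (S.f i) ≠ α'' (S.h i)) →
        Nonempty (SignedGKMIso S.G α' S.G α'')) := by
  obtain ⟨X, rfl⟩ := Section7.exists_signedLift hcompat hsame
  rcases X.aligned_or_anti with hal | hanti
  · exact (X.nonempty_iso_of_aligned hal).imp_right Or.inl
  · refine Or.inr (Or.inr ⟨fun i => Int.isUnit_iff.mp (X.isUnit_k_of_anti hanti i).1,
      X.α_f_ne_α_h hanti, fun α'' hcompat'' hsame'' hne => ?_⟩)
    obtain ⟨Y, rfl⟩ := Section7.exists_signedLift hcompat'' hsame''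
    exact X.nonempty_iso_of_anti hanti Y (Y.anti_of_α_f_ne_α_h hne)

/-- in the Section 7 setting with `n ≠ 4`, every signed GKM structure
compatible with the underlying unsigned GKM graph of `Γ` is, up to isomorphism, one
of at most three: (I) `Γ` itself; (II) (only for `n` even) the structure with every
second pair of basic-edge weights flipped; (III) (only if all `k_i = ±1`) the unique
structure in which the two basic edges over a base edge never carry the same weight. -/
theorem statement18 (S : Section7) (hn4 : S.n ≠ 4)
    (α' : S.G.E → Zm 2)
    (hcompat : ∃ C : Connection S.G, SignedCompat S.G α' C)
    (hsame : ∀ ed, pm (α' ed) = pm (S.aG ed)) :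
    Nonempty (SignedGKMIso S.G α' S.G S.aG) ∨
    (Even S.n ∧ Nonempty (SignedGKMIso S.G α' S.G S.alphaII)) ∨
    ((∀ i, S.k i = 1 ∨ S.k i = -1) ∧
      (∀ i, α' (S.f i) ≠ α' (S.h i)) ∧
      ∀ α'' : S.G.E → Zm 2, (∃ C : Connection S.G, SignedCompat S.G α'' C) →
        (∀ ed, pm (α'' ed) = pm (S.aG ed)) → (∀ i, α'' (S.f i) ≠ α'' (S.h i)) →
        Nonempty (SignedGKMIso S.G α' S.G α'')) :=
  statement18_general S α' hcompat hsame

end GKMPaper
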